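/- Let φ and ψ be modal CNF formulas, let σ̄ = ⟨σ₁,…,σₙ⟩ be a consistent permutation sequence with each σᵢ of finite order, and let C be a class of pointed Kripke models closed under trees such that C ∩ C_Tree is closed under σ̄. If σ̄ is a layered symmetry of φ (σ̄(φ) = φ), then φ ⊨_C ψ if and only if φ ⊨_C σ̄(ψ). -/

import Mathlib

namespace ModalSym

inductive Lit (Atom : Type) : Type
  | pos (a : Atom) : Lit Atom
  | neg (a : Atom) : Lit Atom
  deriving DecidableEq

namespace Lit
def flip {Atom : Type} : Lit Atom → Lit Atom
  | pos a => neg a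
  | neg a => pos a
def atom {Atom : Type} : Lit Atom → Atom
  | pos a => a
  | neg a => a
end Lit

/-- A permutation `σ` of literals is consistent when it commutes with negation. -/
def Consistent {Atom : Type} (σ : Lit Atom → Lit Atom) : Prop :=
  ∀ l, σ l.flip = (σ l).flip

/-- Modal CNF clauses of modal depth at most `n`: a clause is a finite set whose
elements are literals or modal literals `□ₘ C` / `¬□ₘ C` (`Bool` gives the polarity,
`true` for `□ₘ C`). -/
@[reducible] def ClauseT (Atom Mod : Type) : ℕ → Type
  | 0 => Finset (Lit Atom)
  | n+1 => Finset (Lit Atom ⊕ Bool × Mod × ClauseT Atom Mod n)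

instance instDecEqClauseT {Atom Mod : Type} [DecidableEq Atom] [DecidableEq Mod] :
    ∀ n, DecidableEq (ClauseT Atom Mod n)
  | 0 => inferInstanceAs (DecidableEq (Finset (Lit Atom)))
  | n+1 =>
    letI := instDecEqClauseT (Atom := Atom) (Mod := Mod) n
    inferInstanceAs (DecidableEq (Finset (Lit Atom ⊕ Bool × Mod × ClauseT Atom Mod n)))

/-- A modal CNF formula (of modal depth at most `n`): a finite set of clauses. -/
@[reducible] def FormT (Atom Mod : Type) (n : ℕ) : Type := Finset (ClauseT Atom Mod n)

/-- A pointed Kripke model. -/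
structure KModel (Atom Mod : Type) : Type 1 where
  W : Type
  pt : W
  V : W → Set Atom
  R : Mod → W → W → Prop

def satLit {Atom : Type} (S : Set Atom) : Lit Atom → Prop
  | .pos a => a ∈ S
  | .neg a => a ∉ S

def satClause {Atom Mod : Type} (M : KModel Atom Mod) :
    ∀ n, ClauseT Atom Mod n → M.W → Prop
  | 0, C, v => ∃ l ∈ C, satLit (M.V v) l
  | n+1, C, v => ∃ e ∈ C,
      match e with
      | Sum.inl l => satLit (M.V v) l
      | Sum.inr (b, m, C') =>
          cond b (∀ u, M.R m v u → satClause M n C' u)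
                 (¬ ∀ u, M.R m v u → satClause M n C' u)

/-- `M ⊨ φ`. -/
def satForm {Atom Mod : Type} (M : KModel Atom Mod) {n : ℕ} (φ : FormT Atom Mod n) : Prop :=
  ∀ C ∈ φ, satClause M n C M.pt

/-- `L_S`, the complete consistent set of literals generated by `S ⊆ Atom`. -/
def genLits {Atom : Type} (S : Set Atom) : Set (Lit Atom) := {l | satLit S l}

def permClause {Atom Mod : Type} [DecidableEq Atom] [DecidableEq Mod]
    (σ : Lit Atom → Lit Atom) : ∀ n, ClauseT Atom Mod n → ClauseT Atom Mod n
  | 0, C => C.image σ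
  | n+1, C => C.image fun e =>
      match e with
      | Sum.inl l => Sum.inl (σ l)
      | Sum.inr (b, m, C') => Sum.inr (b, m, permClause σ n C')

/-- The action `σ(φ)` of a permutation of literals on a modal CNF formula. -/
def permForm {Atom Mod : Type} [DecidableEq Atom] [DecidableEq Mod]
    (σ : Lit Atom → Lit Atom) {n : ℕ} (φ : FormT Atom Mod n) : FormT Atom Mod n :=
  φ.image (permClause σ n)

/-- The permuted model `σ(M)`, with `V'(v) = σ(L_{V(v)}) ∩ Atom`. -/
def permModel {Atom Mod : Type} (σ : Lit Atom → Lit Atom) (M : KModel Atom Mod) :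
    KModel Atom Mod where
  W := M.W
  pt := M.pt
  V := fun v => {a | Lit.pos a ∈ σ '' genLits (M.V v)}
  R := M.R

def IsBisim {Atom Mod : Type} (M M' : KModel Atom Mod) (Z : M.W → M'.W → Prop) : Prop :=
  Z M.pt M'.pt ∧
  (∀ v v', Z v v' → ∀ a, a ∈ M.V v ↔ a ∈ M'.V v') ∧
  (∀ v v' m u, Z v v' → M.R m v u → ∃ u', M'.R m v' u' ∧ Z u u') ∧
  (∀ v v' m u', Z v v' → M'.R m v' u' → ∃ u, M.R m v u ∧ Z u u')

def Bisimilar {Atom Mod : Type} (M M' : KModel Atom Mod) : Prop := ∃ Z, IsBisim M M' Z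

def IsSigmaSim {Atom Mod : Type} (σ : Lit Atom → Lit Atom) (M M' : KModel Atom Mod)
    (Z : M.W → M'.W → Prop) : Prop :=
  Z M.pt M'.pt ∧
  (∀ v v', Z v v' → ∀ l, l ∈ genLits (M.V v) ↔ σ l ∈ genLits (M'.V v')) ∧
  (∀ v v' m u, Z v v' → M.R m v u → ∃ u', M'.R m v' u' ∧ Z u u') ∧
  (∀ v v' m u', Z v v' → M'.R m v' u' → ∃ u, M.R m v u ∧ Z u u')

/-- `M ,→σ M'`. -/
def SigmaSim {Atom Mod : Type} (σ : Lit Atom → Lit Atom) (M M' : KModel Atom Mod) : Prop :=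
  ∃ Z, IsSigmaSim σ M M' Z

/-- `IsPathFrom M v p`: `p` is a valid path (list of (modality, state) steps) starting at `v`. -/
def IsPathFrom {Atom Mod : Type} (M : KModel Atom Mod) : M.W → List (Mod × M.W) → Prop
  | _, [] => True
  | v, s :: rest => M.R s.1 v s.2 ∧ IsPathFrom M s.2 rest

def pathLast {Atom Mod : Type} (M : KModel Atom Mod) : M.W → List (Mod × M.W) → M.W
  | v, [] => v
  | _, s :: rest => pathLast M s.2 rest

/-- A tree model: every state is the last state of exactly one rooted path. -/
def IsTree {Atom Mod : Type} (M : KModel Atom Mod) : Prop :=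
  ∀ v : M.W, ∃! p : List (Mod × M.W), IsPathFrom M M.pt p ∧ pathLast M M.pt p = v

/-- The depth of a state: the (minimal) length of a rooted path leading to it. -/
noncomputable def depth {Atom Mod : Type} (M : KModel Atom Mod) (v : M.W) : ℕ :=
  sInf {d | ∃ p, IsPathFrom M M.pt p ∧ pathLast M M.pt p = v ∧ p.length = d}

/-- The unravelling `T(M)`. -/
def unravel {Atom Mod : Type} (M : KModel Atom Mod) : KModel Atom Mod where
  W := {p : List (Mod × M.W) // IsPathFrom M M.pt p}
  pt := ⟨[], trivial⟩
  V := fun p => M.V (pathLast M M.pt p.1)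
  R := fun m p p' => ∃ v, p'.1 = p.1 ++ [(m, v)]

/-- `head(σ̄)`: the first permutation of the sequence, identity for the empty sequence. -/
def headP {Atom : Type} (σs : List (Lit Atom → Lit Atom)) : Lit Atom → Lit Atom :=
  σs.headD id

def lpermClause {Atom Mod : Type} [DecidableEq Atom] [DecidableEq Mod]
    (σs : List (Lit Atom → Lit Atom)) : ∀ n, ClauseT Atom Mod n → ClauseT Atom Mod n
  | 0, C => C.image (headP σs)
  | n+1, C => C.image fun e =>
      match e with
      | Sum.inl l => Sum.inl (headP σs l)
      | Sum.inr (b, m, C') => Sum.inr (b, m, lpermClause σs.tail n C')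

/-- The action `σ̄(φ)` of a permutation sequence on a modal CNF formula. -/
def lpermForm {Atom Mod : Type} [DecidableEq Atom] [DecidableEq Mod]
    (σs : List (Lit Atom → Lit Atom)) {n : ℕ} (φ : FormT Atom Mod n) : FormT Atom Mod n :=
  φ.image (lpermClause σs n)

/-- The layered permuted model `σ̄(M)` (meaningful on tree models):
at a state of depth `d` the permutation `head(σ̄_{d+1})` is used. -/
noncomputable def lpermModel {Atom Mod : Type} (σs : List (Lit Atom → Lit Atom))
    (M : KModel Atom Mod) : KModel Atom Mod where
  W := M.W
  pt := M.pt
  V := fun v => {a | Lit.pos a ∈ headP (σs.drop (depth M v)) '' genLits (M.V v)}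
  R := M.R

def IsLSim {Atom Mod : Type} (σs : List (Lit Atom → Lit Atom)) (M M' : KModel Atom Mod)
    (Z : ℕ → M.W → M'.W → Prop) : Prop :=
  Z 0 M.pt M'.pt ∧
  (∀ i v v', Z i v v' →
    ∀ l, l ∈ genLits (M.V v) ↔ headP (σs.drop i) l ∈ genLits (M'.V v')) ∧
  (∀ i v v' m u, Z i v v' → M.R m v u → ∃ u', M'.R m v' u' ∧ Z (i+1) u u') ∧
  (∀ i v v' m u', Z i v v' → M'.R m v' u' → ∃ u, M.R m v u ∧ Z (i+1) u u')

/-- `M ,→σ̄ M'`. -/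
def LSim {Atom Mod : Type} (σs : List (Lit Atom → Lit Atom)) (M M' : KModel Atom Mod) : Prop :=
  ∃ Z, IsLSim σs M M' Z

/-- `Mod_C(φ)`: the models in the class `𝒞` satisfying `φ`. -/
def ModC {Atom Mod : Type} (𝒞 : Set (KModel Atom Mod)) {n : ℕ} (φ : FormT Atom Mod n) :
    Set (KModel Atom Mod) := {M ∈ 𝒞 | satForm M φ}

/-- `φ ⊨_C ψ`. -/
def Entails {Atom Mod : Type} (𝒞 : Set (KModel Atom Mod)) {n₁ n₂ : ℕ}
    (φ : FormT Atom Mod n₁) (ψ : FormT Atom Mod n₂) : Prop :=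
  ModC 𝒞 φ ⊆ ModC 𝒞 ψ

/-! On a tree model `T` the layered permuted valuation is matched, depth by depth, with the
layered action on formulas, so `σ̄(T) ⊨ σ̄(χ) ↔ T ⊨ χ`. As `𝒞` is closed under bisimilar trees
and under `σ̄`, and `σ̄(φ) = φ`, this gives `φ ⊨_𝒞 σ̄(χ) → φ ⊨_𝒞 χ` for every `χ`. Conversely,
`σ̄` has some finite order `k` on formulas, so `ψ = σ̄^(k-1)(σ̄(ψ))`, and `k - 1` applications
of the first implication turn `φ ⊨_𝒞 ψ` into `φ ⊨_𝒞 σ̄(ψ)`. -/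

section Development

variable {Atom Mod : Type}

lemma satLit_flip (S : Set Atom) (l : Lit Atom) : satLit S l.flip ↔ ¬ satLit S l := by
  cases l <;> simp [satLit, Lit.flip]

lemma satLit_image_genLits {σ : Lit Atom → Lit Atom} (hσ : Function.Injective σ)
    (hc : Consistent σ) (S : Set Atom) (l : Lit Atom) :
    satLit {a | Lit.pos a ∈ σ '' genLits S} (σ l) ↔ satLit S l := by
  cases h : σ l with
  | pos a =>
    show Lit.pos a ∈ σ '' genLits S ↔ _
    rw [← h, hσ.mem_set_image]
    rfl
  | neg a =>
    have hpos : Lit.pos a = σ l.flip := by rw [hc l, h]; rfl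
    show Lit.pos a ∉ σ '' genLits S ↔ _
    rw [hpos, hσ.mem_set_image]
    show ¬ satLit S l.flip ↔ _
    rw [satLit_flip, not_not]

lemma headP_of_forall_mem {P : (Lit Atom → Lit Atom) → Prop} (hid : P id)
    {σs : List (Lit Atom → Lit Atom)} (h : ∀ σ ∈ σs, P σ) : P (headP σs) := by
  cases σs with
  | nil => exact hid
  | cons σ _ => exact h σ List.mem_cons_self

variable {M : KModel Atom Mod}

lemma isPathFrom_append (v : M.W) (p : List (Mod × M.W)) (s : Mod × M.W) :
    IsPathFrom M v (p ++ [s]) ↔ IsPathFrom M v p ∧ M.R s.1 (pathLast M v p) s.2 := by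
  induction p generalizing v with
  | nil => simp [IsPathFrom, pathLast]
  | cons t rest ih =>
    show M.R t.1 v t.2 ∧ IsPathFrom M t.2 (rest ++ [s]) ↔
      (M.R t.1 v t.2 ∧ IsPathFrom M t.2 rest) ∧ _
    rw [ih t.2, and_assoc]
    rfl

lemma pathLast_append (v : M.W) (p : List (Mod × M.W)) (s : Mod × M.W) :
    pathLast M v (p ++ [s]) = s.2 := by
  induction p generalizing v with
  | nil => rfl
  | cons t rest ih => exact ih t.2

lemma IsTree.depth_eq_length (hT : IsTree M) {p : List (Mod × M.W)}
    (hp : IsPathFrom M M.pt p) : depth M (pathLast M M.pt p) = p.length := by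
  obtain ⟨q, -, hq⟩ := hT (pathLast M M.pt p)
  have hlen : {d | ∃ r, IsPathFrom M M.pt r ∧ pathLast M M.pt r = pathLast M M.pt p ∧
      r.length = d} = {p.length} := by
    ext d
    constructor
    · rintro ⟨r, hr, hlast, rfl⟩
      rw [hq r ⟨hr, hlast⟩, hq p ⟨hp, rfl⟩]
      rfl
    · rintro rfl
      exact ⟨p, hp, rfl, rfl⟩
  rw [depth, hlen, csInf_singleton]

lemma IsTree.depth_pt (hT : IsTree M) : depth M M.pt = 0 :=
  hT.depth_eq_length (p := []) trivial

lemma IsTree.depth_of_rel (hT : IsTree M) {m : Mod} {v u : M.W} (h : M.R m v u) :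
    depth M u = depth M v + 1 := by
  obtain ⟨p, ⟨hp, rfl⟩, -⟩ := hT v
  have hu := hT.depth_eq_length ((isPathFrom_append _ p (m, u)).2 ⟨hp, h⟩)
  rw [pathLast_append] at hu
  rw [hu, hT.depth_eq_length hp, List.length_append, List.length_singleton]

lemma satClause_iff_of_isBisim {M M' : KModel Atom Mod} {Z : M.W → M'.W → Prop}
    (hZ : IsBisim M M' Z) (n : ℕ) (C : ClauseT Atom Mod n) {v : M.W} {v' : M'.W}
    (hvv' : Z v v') : satClause M n C v ↔ satClause M' n C v' := by
  obtain ⟨-, hharm, hzig, hzag⟩ := hZ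
  have hV : M.V v = M'.V v' := Set.ext (hharm v v' hvv')
  induction n generalizing v v' with
  | zero =>
    show (∃ l ∈ C, satLit (M.V v) l) ↔ ∃ l ∈ C, satLit (M'.V v') l
    rw [hV]
  | succ n ih =>
    refine exists_congr fun e => and_congr_right fun _ => ?_
    rcases e with l | ⟨b, m, C'⟩
    · show satLit (M.V v) l ↔ satLit (M'.V v') l
      rw [hV]
    · have hbox : (∀ u, M.R m v u → satClause M n C' u) ↔
          (∀ u', M'.R m v' u' → satClause M' n C' u') := by
        constructor
        · intro h u' hR'
          obtain ⟨u, hR, hu⟩ := hzag v v' m u' hvv' hR'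
          exact (ih C' hu (Set.ext (hharm u u' hu))).1 (h u hR)
        · intro h u hR
          obtain ⟨u', hR', hu⟩ := hzig v v' m u hvv' hR
          exact (ih C' hu (Set.ext (hharm u u' hu))).2 (h u' hR')
      cases b
      · exact not_congr hbox
      · exact hbox

lemma satForm_iff_of_bisimilar {M M' : KModel Atom Mod} (h : Bisimilar M M') {n : ℕ}
    (ψ : FormT Atom Mod n) : satForm M ψ ↔ satForm M' ψ := by
  obtain ⟨Z, hZ⟩ := h
  exact forall₂_congr fun C _ => satClause_iff_of_isBisim hZ n C hZ.1

lemma exists_common_order {σs : List (Lit Atom → Lit Atom)}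
    (hord : ∀ σ ∈ σs, ∃ k : ℕ, 1 ≤ k ∧ σ^[k] = id) :
    ∃ k : ℕ, 1 ≤ k ∧ ∀ σ ∈ σs, σ^[k] = id := by
  induction σs with
  | nil => exact ⟨1, le_rfl, by simp⟩
  | cons σ rest ih =>
    obtain ⟨k₁, hk₁, hσ⟩ := hord σ List.mem_cons_self
    obtain ⟨k₂, hk₂, hrest⟩ := ih fun τ hτ => hord τ (List.mem_cons_of_mem σ hτ)
    refine ⟨k₁ * k₂, Nat.one_le_iff_ne_zero.2 (by positivity), ?_⟩
    rintro τ (_ | ⟨_, hτ⟩)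
    · rw [Function.iterate_mul, hσ, Function.iterate_id]
    · rw [mul_comm, Function.iterate_mul, hrest τ hτ, Function.iterate_id]

variable [DecidableEq Atom] [DecidableEq Mod] {σs : List (Lit Atom → Lit Atom)}

lemma satClause_lpermModel (hinj : ∀ σ ∈ σs, Function.Injective σ)
    (hcons : ∀ σ ∈ σs, Consistent σ) (hT : IsTree M) (n : ℕ) (C : ClauseT Atom Mod n)
    {v : M.W} {i : ℕ} (hv : depth M v = i) :
    satClause (lpermModel σs M) n (lpermClause (σs.drop i) n C) v ↔ satClause M n C v := by
  have hlit : ∀ {v : M.W} {i : ℕ}, depth M v = i → ∀ l,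
      satLit ((lpermModel σs M).V v) (headP (σs.drop i) l) ↔ satLit (M.V v) l := by
    rintro v _ rfl
    exact satLit_image_genLits
      (headP_of_forall_mem Function.injective_id fun σ hσ => hinj σ (List.mem_of_mem_drop hσ))
      (headP_of_forall_mem (fun _ => rfl) fun σ hσ => hcons σ (List.mem_of_mem_drop hσ)) _
  induction n generalizing v i with
  | zero =>
    show (∃ l ∈ C.image (headP (σs.drop i)), _) ↔ _
    simp only [Finset.mem_image, exists_exists_and_eq_and]
    exact exists_congr fun l => and_congr_right fun _ => hlit hv l
  | succ n ih =>
    show (∃ e ∈ C.image _, _) ↔ _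
    simp only [Finset.mem_image, exists_exists_and_eq_and]
    refine exists_congr fun e => and_congr_right fun _ => ?_
    rcases e with l | ⟨b, m, C'⟩
    · exact hlit hv l
    · have hbox : (∀ u, M.R m v u →
            satClause (lpermModel σs M) n (lpermClause (σs.drop i).tail n C') u) ↔
          ∀ u, M.R m v u → satClause M n C' u := by
        refine forall₂_congr fun u hR => ?_
        rw [List.tail_drop]
        exact ih C' (by rw [hT.depth_of_rel hR, hv])
      cases b
      · exact not_congr hbox
      · exact hbox

lemma satForm_lpermModel_lpermForm (hinj : ∀ σ ∈ σs, Function.Injective σ)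
    (hcons : ∀ σ ∈ σs, Consistent σ) (hT : IsTree M) {n : ℕ} (ψ : FormT Atom Mod n) :
    satForm (lpermModel σs M) (lpermForm σs ψ) ↔ satForm M ψ := by
  have hroot : ∀ C : ClauseT Atom Mod n,
      satClause (lpermModel σs M) n (lpermClause σs n C) M.pt ↔ satClause M n C M.pt :=
    fun C => satClause_lpermModel (i := 0) hinj hcons hT n C hT.depth_pt
  simp only [satForm, lpermForm, Finset.forall_mem_image]
  exact forall₂_congr fun C _ => hroot C

lemma lpermClause_iterate_eq_id {k : ℕ} (hk : ∀ σ ∈ σs, σ^[k] = id) (n : ℕ) :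
    (lpermClause (Mod := Mod) σs n)^[k] = id := by
  induction n generalizing σs with
  | zero =>
    funext C
    show (Finset.image (headP σs))^[k] C = C
    rw [Finset.iterate_image, headP_of_forall_mem (P := fun σ => σ^[k] = id)
      (Function.iterate_id k) hk, Finset.image_id]
  | succ n ih =>
    have hhead : (headP σs)^[k] = id :=
      headP_of_forall_mem (P := fun σ => σ^[k] = id) (Function.iterate_id k) hk
    have htail : (lpermClause σs.tail n)^[k] = id :=
      ih fun σ hσ => hk σ (List.mem_of_mem_tail hσ)
    funext C
    refine (Finset.iterate_image _ k).trans
      ((Finset.image_congr fun e _ => ?_).trans Finset.image_id)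
    rcases e with l | ⟨b, m, C'⟩
    · refine (Function.Semiconj.iterate_right (f := Sum.inl) (ga := headP σs) (gb := _)
        (fun _ => rfl) k l).symm.trans ?_
      rw [hhead]
      rfl
    · refine (Function.Semiconj.iterate_right (f := fun C' => Sum.inr (b, m, C'))
        (ga := lpermClause σs.tail n) (gb := _) (fun _ => rfl) k C').symm.trans ?_
      rw [htail]
      rfl

lemma lpermForm_iterate_eq_self {k : ℕ} (hk : ∀ σ ∈ σs, σ^[k] = id) {n : ℕ}
    (ψ : FormT Atom Mod n) : (lpermForm σs)^[k] ψ = ψ := by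
  show (Finset.image (lpermClause σs n))^[k] ψ = ψ
  rw [Finset.iterate_image, lpermClause_iterate_eq_id hk, Finset.image_id]

lemma Entails.of_lpermForm {𝒞 : Set (KModel Atom Mod)} {n₁ n₂ : ℕ} {φ : FormT Atom Mod n₁}
    {χ : FormT Atom Mod n₂} (hinj : ∀ σ ∈ σs, Function.Injective σ)
    (hcons : ∀ σ ∈ σs, Consistent σ) (htrees : ∀ M ∈ 𝒞, ∃ T ∈ 𝒞, IsTree T ∧ Bisimilar M T)
    (hclosed : ∀ M ∈ 𝒞, IsTree M → lpermModel σs M ∈ 𝒞) (hsym : lpermForm σs φ = φ)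
    (h : Entails 𝒞 φ (lpermForm σs χ)) : Entails 𝒞 φ χ := by
  rintro M ⟨hM, hMφ⟩
  obtain ⟨T, hT, hTtree, hMT⟩ := htrees M hM
  have hσTφ : satForm (lpermModel σs T) φ := by
    rw [← hsym, satForm_lpermModel_lpermForm hinj hcons hTtree]
    exact (satForm_iff_of_bisimilar hMT φ).1 hMφ
  have hσTχ := (h ⟨hclosed T hT hTtree, hσTφ⟩).2
  rw [satForm_lpermModel_lpermForm hinj hcons hTtree, ← satForm_iff_of_bisimilar hMT] at hσTχ
  exact ⟨hM, hσTχ⟩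

end Development

theorem entails_iff_entails_lperm_general {Atom Mod : Type}
    [DecidableEq Atom] [DecidableEq Mod]
    {n₁ n₂ : ℕ} (φ : FormT Atom Mod n₁) (ψ : FormT Atom Mod n₂)
    (σs : List (Lit Atom → Lit Atom))
    (hbij : ∀ σ ∈ σs, Function.Bijective σ) (hcons : ∀ σ ∈ σs, Consistent σ)
    (hord : ∀ σ ∈ σs, ∃ k : ℕ, 1 ≤ k ∧ σ^[k] = id)
    (𝒞 : Set (KModel Atom Mod))
    (htrees : ∀ M ∈ 𝒞, ∃ T ∈ 𝒞, IsTree T ∧ Bisimilar M T)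
    (hclosed : ∀ M ∈ 𝒞, IsTree M → lpermModel σs M ∈ 𝒞)
    (hsym : lpermForm σs φ = φ) :
    Entails 𝒞 φ ψ ↔ Entails 𝒞 φ (lpermForm σs ψ) := by
  have hinj : ∀ σ ∈ σs, Function.Injective σ := fun σ hσ => (hbij σ hσ).injective
  have hback : ∀ {n} (χ : FormT Atom Mod n), Entails 𝒞 φ (lpermForm σs χ) → Entails 𝒞 φ χ :=
    fun _ => Entails.of_lpermForm hinj hcons htrees hclosed hsym
  refine ⟨fun h => ?_, hback ψ⟩
  have hback_iter : ∀ j {n} (χ : FormT Atom Mod n),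
      Entails 𝒞 φ ((lpermForm σs)^[j] χ) → Entails 𝒞 φ χ := by
    intro j
    induction j with
    | zero => exact fun _ => id
    | succ j ih => exact fun χ hχ => hback χ (ih _ hχ)
  obtain ⟨k, hk, hid⟩ := exists_common_order hord
  obtain ⟨j, rfl⟩ : ∃ j, k = j + 1 := ⟨k - 1, by omega⟩
  rw [← lpermForm_iterate_eq_self hid ψ, Function.iterate_succ_apply] at h
  exact hback_iter j _ h

/-- layered symmetries preserve entailment: `φ ⊨_𝒞 ψ` iff `φ ⊨_𝒞 σ̄(ψ)`. -/
theorem entails_iff_entails_lperm {Atom Mod : Type} [Countable Atom] [Countable Mod]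
    [DecidableEq Atom] [DecidableEq Mod]
    {n₁ n₂ : ℕ} (φ : FormT Atom Mod n₁) (ψ : FormT Atom Mod n₂)
    (σs : List (Lit Atom → Lit Atom))
    (hbij : ∀ σ ∈ σs, Function.Bijective σ) (hcons : ∀ σ ∈ σs, Consistent σ)
    (hord : ∀ σ ∈ σs, ∃ k : ℕ, 1 ≤ k ∧ σ^[k] = id)
    (𝒞 : Set (KModel Atom Mod))
    (htrees : ∀ M ∈ 𝒞, ∃ T ∈ 𝒞, IsTree T ∧ Bisimilar M T)
    (hclosed : ∀ M ∈ 𝒞, IsTree M → lpermModel σs M ∈ 𝒞)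
    (hsym : lpermForm σs φ = φ) :
    Entails 𝒞 φ ψ ↔ Entails 𝒞 φ (lpermForm σs ψ) :=
  entails_iff_entails_lperm_general φ ψ σs hbij hcons hord 𝒞 htrees hclosed hsym

end ModalSym
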